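/- Let K ≥ 1, d ≥ 1, n ≥ 1, and λ_{W2}, λ_{W1}, λ_{H1} > 0. Let (W₂, W₁, H₁) ∈ ℝ^{K×d} × ℝ^{d×d} × ℝ^{d×Kn} be a global minimizer (or, more generally, any critical point where all partial derivatives vanish) of g(W₂,W₁,H₁) := (1/(2Kn))‖W₂W₁H₁ − Y‖_F² + (λ_{W2}/2)‖W₂‖_F² + (λ_{W1}/2)‖W₁‖_F² + (λ_{H1}/2)‖H₁‖_F². Then the layer balancedness identities hold: λ_{W2}·W₂ᵀW₂ = λ_{W1}·W₁W₁ᵀ and λ_{W1}·W₁ᵀW₁ = λ_{H1}·H₁H₁ᵀ. -/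

import Mathlib

/-! Along a line `X + tΔ` in one factor the loss is a quadratic in `t` that is minimal at
`t = 0`, so its linear coefficient `⟪∇_X g, Δ⟫` vanishes for every `Δ` and all three partial
gradients are zero. With the residual `E = W₂W₁H₁ - Y`, consecutive factors `P`, `Q` have
gradients `s • (A * Qᵀ) + λ_P • P` and `s • (Pᵀ * A) + λ_Q • Q` for a common `A`
(`E H₁ᵀ`, resp. `W₂ᵀ E`), so `Pᵀ ∇_P = ∇_Q Qᵀ` is exactly `λ_P • (Pᵀ * P) = λ_Q • (Q * Qᵀ)`. -/

open Matrix Finset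

noncomputable section

/-- Squared Frobenius norm of a real matrix. -/
def frobSq {m n : Type*} [Fintype m] [Fintype n] (A : Matrix m n ℝ) : ℝ :=
  ∑ i, ∑ j, (A i j) ^ 2

section Frobenius

variable {m n : Type*} [Fintype m] [Fintype n]

theorem frobSq_eq_trace (A : Matrix m n ℝ) : frobSq A = trace (Aᵀ * A) := by
  simp only [frobSq, trace, Matrix.diag, mul_apply, transpose_apply, sq]
  exact Finset.sum_comm

theorem trace_transpose_mul_comm (A B : Matrix m n ℝ) : trace (Bᵀ * A) = trace (Aᵀ * B) := by
  rw [← trace_transpose, transpose_mul, transpose_transpose]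

theorem frobSq_add_smul (A B : Matrix m n ℝ) (t : ℝ) :
    frobSq (A + t • B) = frobSq A + 2 * t * trace (Aᵀ * B) + t ^ 2 * frobSq B := by
  simp only [frobSq_eq_trace, transpose_add, transpose_smul, Matrix.add_mul, Matrix.mul_add,
    Matrix.smul_mul, Matrix.mul_smul, trace_add, trace_smul, smul_eq_mul,
    trace_transpose_mul_comm A B]
  ring

theorem eq_zero_of_trace_transpose_mul_self_eq_zero {A : Matrix m n ℝ}
    (h : trace (Aᵀ * A) = 0) : A = 0 :=
  trace_conjTranspose_mul_self_eq_zero_iff.mp (by rwa [conjTranspose_eq_transpose_of_trivial])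

end Frobenius

theorem linear_coeff_eq_zero_of_forall_le {m n m' n' : Type*} [Fintype m] [Fintype n]
    [Fintype m'] [Fintype n'] {c l : ℝ} {E B : Matrix m n ℝ} {X Δ : Matrix m' n' ℝ}
    (h : ∀ t : ℝ, c * frobSq E + l / 2 * frobSq X ≤
      c * frobSq (E + t • B) + l / 2 * frobSq (X + t • Δ)) :
    2 * c * trace (Eᵀ * B) + l * trace (Xᵀ * Δ) = 0 := by
  have hquad : ∀ t : ℝ, 0 ≤ (c * frobSq B + l / 2 * frobSq Δ) * (t * t)
      + (2 * c * trace (Eᵀ * B) + l * trace (Xᵀ * Δ)) * t + 0 := by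
    intro t
    have ht := h t
    rw [frobSq_add_smul, frobSq_add_smul] at ht
    linarith
  have hdisc := discrim_le_zero hquad
  rw [discrim] at hdisc
  nlinarith

theorem gradient_eq_zero_of_forall_le {k m n p : Type*} [Fintype k] [Fintype m] [Fintype n]
    [Fintype p] {c l : ℝ} {E : Matrix k p ℝ} {L : Matrix k m ℝ} {R : Matrix n p ℝ}
    {X : Matrix m n ℝ}
    (h : ∀ (Δ : Matrix m n ℝ) (t : ℝ), c * frobSq E + l / 2 * frobSq X ≤
      c * frobSq (E + t • (L * Δ * R)) + l / 2 * frobSq (X + t • Δ)) :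
    (2 * c) • (Lᵀ * E * Rᵀ) + l • X = 0 := by
  set G := (2 * c) • (Lᵀ * E * Rᵀ) + l • X
  have hadjoint : trace (Gᵀ * G) = 2 * c * trace (Eᵀ * (L * G * R)) + l * trace (Xᵀ * G) := by
    simp only [G, transpose_add, transpose_smul, transpose_mul, transpose_transpose,
      Matrix.add_mul, Matrix.smul_mul, trace_add, trace_smul, smul_eq_mul]
    rw [trace_mul_cycle', Matrix.mul_assoc, Matrix.mul_assoc, Matrix.mul_assoc]
  exact eq_zero_of_trace_transpose_mul_self_eq_zero
    (hadjoint.trans (linear_coeff_eq_zero_of_forall_le (h G)))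

section ExtendedUFM

variable {κ δ δ' ν : Type*} [Fintype κ] [Fintype δ] [Fintype δ'] [Fintype ν]
  {c l2 l1 lh : ℝ} {Y : Matrix κ ν ℝ} {W2 : Matrix κ δ ℝ} {W1 : Matrix δ δ' ℝ}
  {H1 : Matrix δ' ν ℝ}

variable (c l2 l1 lh Y) in
def ufmLoss (W2 : Matrix κ δ ℝ) (W1 : Matrix δ δ' ℝ) (H1 : Matrix δ' ν ℝ) : ℝ :=
  c * frobSq (W2 * W1 * H1 - Y) + l2 / 2 * frobSq W2 + l1 / 2 * frobSq W1 + lh / 2 * frobSq H1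

theorem ufmLoss_gradient_W2_eq_zero [DecidableEq κ]
    (h : ∀ W2', ufmLoss c l2 l1 lh Y W2 W1 H1 ≤ ufmLoss c l2 l1 lh Y W2' W1 H1) :
    (2 * c) • ((W2 * W1 * H1 - Y) * H1ᵀ * W1ᵀ) + l2 • W2 = 0 := by
  have hdir : ∀ (Δ : Matrix κ δ ℝ) (t : ℝ),
      c * frobSq (W2 * W1 * H1 - Y) + l2 / 2 * frobSq W2 ≤
      c * frobSq (W2 * W1 * H1 - Y + t • ((1 : Matrix κ κ ℝ) * Δ * (W1 * H1)))
        + l2 / 2 * frobSq (W2 + t • Δ) := by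
    intro Δ t
    have hres : (W2 + t • Δ) * W1 * H1 - Y =
        W2 * W1 * H1 - Y + t • ((1 : Matrix κ κ ℝ) * Δ * (W1 * H1)) := by
      simp only [Matrix.one_mul, Matrix.add_mul, Matrix.smul_mul, Matrix.mul_assoc]; abel
    have ht := h (W2 + t • Δ)
    simp only [ufmLoss, hres] at ht
    linarith
  simpa only [transpose_one, Matrix.one_mul, transpose_mul, Matrix.mul_assoc]
    using gradient_eq_zero_of_forall_le hdir

theorem ufmLoss_gradient_W1_eq_zero
    (h : ∀ W1', ufmLoss c l2 l1 lh Y W2 W1 H1 ≤ ufmLoss c l2 l1 lh Y W2 W1' H1) :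
    (2 * c) • (W2ᵀ * (W2 * W1 * H1 - Y) * H1ᵀ) + l1 • W1 = 0 := by
  have hdir : ∀ (Δ : Matrix δ δ' ℝ) (t : ℝ),
      c * frobSq (W2 * W1 * H1 - Y) + l1 / 2 * frobSq W1 ≤
      c * frobSq (W2 * W1 * H1 - Y + t • (W2 * Δ * H1)) + l1 / 2 * frobSq (W1 + t • Δ) := by
    intro Δ t
    have hres : W2 * (W1 + t • Δ) * H1 - Y = W2 * W1 * H1 - Y + t • (W2 * Δ * H1) := by
      simp only [Matrix.mul_add, Matrix.add_mul, Matrix.mul_smul, Matrix.smul_mul]; abel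
    have ht := h (W1 + t • Δ)
    simp only [ufmLoss, hres] at ht
    linarith
  exact gradient_eq_zero_of_forall_le hdir

theorem ufmLoss_gradient_H1_eq_zero [DecidableEq ν]
    (h : ∀ H1', ufmLoss c l2 l1 lh Y W2 W1 H1 ≤ ufmLoss c l2 l1 lh Y W2 W1 H1') :
    (2 * c) • (W1ᵀ * (W2ᵀ * (W2 * W1 * H1 - Y))) + lh • H1 = 0 := by
  have hdir : ∀ (Δ : Matrix δ' ν ℝ) (t : ℝ),
      c * frobSq (W2 * W1 * H1 - Y) + lh / 2 * frobSq H1 ≤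
      c * frobSq (W2 * W1 * H1 - Y + t • (W2 * W1 * Δ * (1 : Matrix ν ν ℝ)))
        + lh / 2 * frobSq (H1 + t • Δ) := by
    intro Δ t
    have hres : W2 * W1 * (H1 + t • Δ) - Y =
        W2 * W1 * H1 - Y + t • (W2 * W1 * Δ * (1 : Matrix ν ν ℝ)) := by
      simp only [Matrix.mul_one, Matrix.mul_add, Matrix.mul_smul]; abel
    have ht := h (H1 + t • Δ)
    simp only [ufmLoss, hres] at ht
    linarith
  simpa only [transpose_one, Matrix.mul_one, transpose_mul, Matrix.mul_assoc]
    using gradient_eq_zero_of_forall_le hdir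

end ExtendedUFM

theorem balanced_of_gradient_eq_zero {k m n : Type*} [Fintype k] [Fintype m] [Fintype n]
    {s lP lQ : ℝ} {A : Matrix k n ℝ} {P : Matrix k m ℝ} {Q : Matrix m n ℝ}
    (hP : s • (A * Qᵀ) + lP • P = 0) (hQ : s • (Pᵀ * A) + lQ • Q = 0) :
    lP • (Pᵀ * P) = lQ • (Q * Qᵀ) := by
  have hP' := congrArg (Pᵀ * ·) hP
  have hQ' := congrArg (· * Qᵀ) hQ
  simp only [Matrix.mul_add, Matrix.add_mul, Matrix.mul_smul, Matrix.smul_mul, Matrix.mul_zero,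
    Matrix.zero_mul, ← Matrix.mul_assoc] at hP' hQ'
  exact add_left_cancel (hP'.trans hQ'.symm)

theorem extended_ufm_layer_balancedness_general
    (K d n : ℕ)
    (lW2 lW1 lH1 : ℝ)
    (Y : Matrix (Fin K) (Fin K × Fin n) ℝ)
    (g : Matrix (Fin K) (Fin d) ℝ → Matrix (Fin d) (Fin d) ℝ →
      Matrix (Fin d) (Fin K × Fin n) ℝ → ℝ)
    (hg : ∀ W2 W1 H1, g W2 W1 H1 =
      1 / (2 * (K : ℝ) * (n : ℝ)) * frobSq (W2 * W1 * H1 - Y)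
        + lW2 / 2 * frobSq W2 + lW1 / 2 * frobSq W1 + lH1 / 2 * frobSq H1)
    (W2 : Matrix (Fin K) (Fin d) ℝ) (W1 : Matrix (Fin d) (Fin d) ℝ)
    (H1 : Matrix (Fin d) (Fin K × Fin n) ℝ)
    (hmin : ∀ W2' W1' H1', g W2 W1 H1 ≤ g W2' W1' H1') :
    lW2 • (W2ᵀ * W2) = lW1 • (W1 * W1ᵀ) ∧
    lW1 • (W1ᵀ * W1) = lH1 • (H1 * H1ᵀ) := by
  obtain rfl : g = ufmLoss (1 / (2 * (K : ℝ) * (n : ℝ))) lW2 lW1 lH1 Y := by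
    funext W2 W1 H1
    exact hg W2 W1 H1
  have hW2 := ufmLoss_gradient_W2_eq_zero fun W2' => hmin W2' W1 H1
  have hW1 := ufmLoss_gradient_W1_eq_zero fun W1' => hmin W2 W1' H1
  have hH1 := ufmLoss_gradient_H1_eq_zero fun H1' => hmin W2 W1 H1'
  refine ⟨balanced_of_gradient_eq_zero hW2 ?_, balanced_of_gradient_eq_zero hW1 hH1⟩
  rwa [← Matrix.mul_assoc]

/-- Layer balancedness at global minimizers of the linear extended UFM:
`λ_{W2}·W₂ᵀW₂ = λ_{W1}·W₁W₁ᵀ` and `λ_{W1}·W₁ᵀW₁ = λ_{H1}·H₁H₁ᵀ`. -/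
theorem extended_ufm_layer_balancedness
    (K d n : ℕ) (hK : 1 ≤ K) (hd : 1 ≤ d) (hn : 1 ≤ n)
    (lW2 lW1 lH1 : ℝ) (hlW2 : 0 < lW2) (hlW1 : 0 < lW1) (hlH1 : 0 < lH1)
    (Y : Matrix (Fin K) (Fin K × Fin n) ℝ)
    (hY : ∀ k p, Y k p = if p.1 = k then 1 else 0)
    (g : Matrix (Fin K) (Fin d) ℝ → Matrix (Fin d) (Fin d) ℝ →
      Matrix (Fin d) (Fin K × Fin n) ℝ → ℝ)
    (hg : ∀ W2 W1 H1, g W2 W1 H1 =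
      1 / (2 * (K : ℝ) * (n : ℝ)) * frobSq (W2 * W1 * H1 - Y)
        + lW2 / 2 * frobSq W2 + lW1 / 2 * frobSq W1 + lH1 / 2 * frobSq H1)
    (W2 : Matrix (Fin K) (Fin d) ℝ) (W1 : Matrix (Fin d) (Fin d) ℝ)
    (H1 : Matrix (Fin d) (Fin K × Fin n) ℝ)
    (hmin : ∀ W2' W1' H1', g W2 W1 H1 ≤ g W2' W1' H1') :
    lW2 • (W2ᵀ * W2) = lW1 • (W1 * W1ᵀ) ∧
    lW1 • (W1ᵀ * W1) = lH1 • (H1 * H1ᵀ) :=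
  extended_ufm_layer_balancedness_general K d n lW2 lW1 lH1 Y g hg W2 W1 H1 hmin
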